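/- Let H be a set of ordinals with no largest element, n ≥ 1, ⟨u_b | b ∈ [H]^n⟩ a uniform n-dimensional Δ-system witnessed by ρ and ⟨r_m | m ⊆ n⟩. Fix a ∈ [H]^m with m < n and k ≤ m. Then the collection {u_{a∪{β}} | β ∈ H is k-addable for a} (where u_{a∪{β}} := u_b[r_{m+1}] for any b ∈ [H]^n extending a∪{β} appropriately) is a Δ-system with root u_{a,k} := u_b[r_{(m+1)∖{k}}]; i.e., for any two distinct k-addable β, β', u_{a∪{β}} ∩ u_{a∪{β'}} = u_{a,k}. -/

import Mathlib

universe u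

/-- The order type of a set of ordinals. -/
noncomputable def otp (s : Set Ordinal.{u}) : Ordinal.{u+1} :=
  @Ordinal.type ↑s (Subrel (· < ·) (· ∈ s)) (by exact inferInstance)

/-- `enumAt a i α`: `α` is the `i`-th element of `a` in increasing order. -/
def enumAt (a : Set Ordinal.{u}) (i : Ordinal.{u+1}) (α : Ordinal.{u}) : Prop :=
  α ∈ a ∧ otp (a ∩ Set.Iio α) = i

/-- `a` and `b` are aligned. -/
def Aligned (a b : Set Ordinal.{u}) : Prop :=
  otp a = otp b ∧ ∀ γ ∈ a ∩ b, otp (a ∩ Set.Iio γ) = otp (b ∩ Set.Iio γ)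

/-- `r(a,b) = {i < otp(a) | a(i) = b(i)}`. -/
def ralign (a b : Set Ordinal.{u}) : Set Ordinal.{u+1} :=
  {i | ∃ α, enumAt a i α ∧ enumAt b i α}

/-- `a[r] = {a(i) | i ∈ r}`, the image of a set of indices under the increasing
enumeration of `a`. -/
def img (a : Set Ordinal.{u}) (r : Set Ordinal.{u+1}) : Set Ordinal.{u} :=
  {α | ∃ i ∈ r, enumAt a i α}

/-- `b[𝐦]` for a finite set `b`: the elements of `b` whose relative position in `b`
lies in `𝐦`. -/
noncomputable def fimg (b : Finset Ordinal.{u}) (s : Set Ordinal.{u+1}) : Set Ordinal.{u} :=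
  {α | α ∈ b ∧ (((b.filter (· < α)).card : Ordinal.{u+1}) ∈ s)}

/-- `α` is `k`-addable for the finite set `a`: `α ∉ a` and `|a ∩ α| = k`. -/
noncomputable def KAddable (α : Ordinal.{u}) (a : Finset Ordinal.{u}) (k : ℕ) : Prop :=
  α ∉ a ∧ (a.filter (· < α)).card = k

/-- `⟨u b | b ∈ [H]^n⟩` is a uniform `n`-dimensional Δ-system witnessed by `ρ` and
`⟨rr 𝐦 | 𝐦 ⊆ n⟩`. -/
noncomputable def IsUniformDeltaSystem (H : Set Ordinal.{u}) (n : ℕ)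
    (u : Finset Ordinal.{u} → Set Ordinal.{u}) (ρ : Ordinal.{u+1})
    (rr : Set Ordinal.{u+1} → Set Ordinal.{u+1}) : Prop :=
  (∀ b : Finset Ordinal.{u}, ↑b ⊆ H → b.card = n → otp (u b) = ρ) ∧
  (∀ a b : Finset Ordinal.{u}, ↑a ⊆ H → ↑b ⊆ H → a.card = n → b.card = n →
      ∀ m : Set Ordinal.{u+1}, Aligned ↑a ↑b → ralign ↑a ↑b = m →
        Aligned (u a) (u b) ∧ ralign (u a) (u b) = rr m) ∧
  (∀ m₀ m₁ : Set Ordinal.{u+1}, m₀ ⊆ Set.Iio (n : Ordinal.{u+1}) →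
      m₁ ⊆ Set.Iio (n : Ordinal.{u+1}) → rr (m₀ ∩ m₁) = rr m₀ ∩ rr m₁)


theorem otp_eq_typein (s : Set Ordinal.{u}) {α : Ordinal.{u}} (hα : α ∈ s) :
    otp (s ∩ Set.Iio α) = Ordinal.typein (Subrel (· < ·) (· ∈ s)) ⟨α, hα⟩ := by
  rw [← Ordinal.type_subrel]
  refine Ordinal.type_eq.2 ⟨?_⟩
  refine RelIso.mk ?_ ?_
  · exact Equiv.mk (fun (x : ↥(s ∩ Set.Iio α)) => (⟨⟨x.1, x.2.1⟩, x.2.2⟩ : {b : ↥s | Subrel (· < ·) (· ∈ s) b ⟨α, hα⟩}))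
      (fun y => ⟨y.1.1, ⟨y.1.2, y.2⟩⟩) (fun x => rfl) (fun y => rfl)
  · exact Iff.rfl

theorem otp_lt (s : Set Ordinal.{u}) {α : Ordinal.{u}} (hα : α ∈ s) :
    otp (s ∩ Set.Iio α) < otp s := by
  rw [otp_eq_typein s hα]; exact Ordinal.typein_lt_type _ _

theorem otp_inj (s : Set Ordinal.{u}) {α α' : Ordinal.{u}} (hα : α ∈ s) (hα' : α' ∈ s)
    (h : otp (s ∩ Set.Iio α) = otp (s ∩ Set.Iio α')) : α = α' := by
  rw [otp_eq_typein s hα, otp_eq_typein s hα'] at h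
  have := Ordinal.typein_injective (Subrel ((· < ·) : Ordinal.{u} → _ → Prop) (· ∈ s)) h
  exact congrArg Subtype.val this

theorem otp_finset (f : Finset Ordinal.{u}) : otp (↑f : Set Ordinal.{u}) = f.card := by
  rw [otp]
  have : Fintype (↑(↑f : Set Ordinal.{u})) := by exact FinsetCoe.fintype f
  rw [Ordinal.type_fintype]
  simp

noncomputable def rk (f : Finset Ordinal.{u}) (α : Ordinal.{u}) : ℕ := (f.filter (· < α)).card

theorem rk_lt_rk {f : Finset Ordinal.{u}} {α γ : Ordinal.{u}} (hα : α ∈ f) (h : α < γ) :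
    rk f α < rk f γ := by
  apply Finset.card_lt_card
  constructor
  · intro x hx
    simp only [Finset.mem_filter] at hx ⊢
    exact ⟨hx.1, hx.2.trans h⟩
  · intro hsub
    have : α ∈ f.filter (· < γ) := by simp [hα, h]
    have := hsub this
    simp at this

theorem rk_lt_card {f : Finset Ordinal.{u}} {α : Ordinal.{u}} (hα : α ∈ f) :
    rk f α < f.card := by
  apply Finset.card_lt_card
  refine ⟨Finset.filter_subset _ _, fun hsub => ?_⟩
  have := hsub hα
  simp at this

theorem rk_inj {f : Finset Ordinal.{u}} {α γ : Ordinal.{u}} (hα : α ∈ f) (hγ : γ ∈ f)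
    (h : rk f α = rk f γ) : α = γ := by
  rcases lt_trichotomy α γ with hl | he | hl
  · exact absurd h (rk_lt_rk hα hl).ne
  · exact he
  · exact absurd h.symm (rk_lt_rk hγ hl).ne

theorem rk_surj {f : Finset Ordinal.{u}} {j : ℕ} (hj : j < f.card) :
    ∃ α ∈ f, rk f α = j := by
  have himg : f.image (rk f) = Finset.range f.card := by
    apply Finset.eq_of_subset_of_card_le
    · intro x hx
      simp only [Finset.mem_image] at hx
      obtain ⟨α, hα, rfl⟩ := hx
      simpa using rk_lt_card hα
    · rw [Finset.card_range, Finset.card_image_of_injOn fun x hx y hy h => rk_inj hx hy h]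
  have : j ∈ f.image (rk f) := by rw [himg]; simpa using hj
  simpa using this

theorem otp_coe_inter_Iio (f : Finset Ordinal.{u}) (α : Ordinal.{u}) :
    otp (↑f ∩ Set.Iio α) = ((rk f α : ℕ) : Ordinal.{u+1}) := by
  have h : (↑f ∩ Set.Iio α : Set Ordinal.{u}) = ↑(f.filter (· < α)) := by
    ext x; simp [and_comm]
  rw [h, otp_finset]; rfl

theorem enumAt_finset_iff {f : Finset Ordinal.{u}} {i : Ordinal.{u+1}} {α : Ordinal.{u}} :
    enumAt ↑f i α ↔ α ∈ f ∧ ((rk f α : ℕ) : Ordinal.{u+1}) = i := by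
  unfold enumAt
  rw [otp_coe_inter_Iio]
  simp

theorem enumAt_unique {s : Set Ordinal.{u}} {i : Ordinal.{u+1}} {α α' : Ordinal.{u}}
    (h : enumAt s i α) (h' : enumAt s i α') : α = α' :=
  otp_inj s h.1 h'.1 (h.2.trans h'.2.symm)

theorem exists_tail (H : Set Ordinal.{u}) (hH : ∀ β ∈ H, ∃ γ ∈ H, β < γ)
    {B : Ordinal.{u}} (hB : B ∈ H) (j : ℕ) :
    ∃ t : Finset Ordinal.{u}, ↑t ⊆ H ∧ t.card = j ∧ ∀ γ ∈ t, B < γ := by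
  induction j with
  | zero => exact ⟨∅, by simp, rfl, by simp⟩
  | succ j ih =>
    obtain ⟨t, htH, htc, htB⟩ := ih
    have hne : (insert B t).Nonempty := ⟨B, Finset.mem_insert_self _ _⟩
    set B' := (insert B t).max' hne with hB'def
    have hB'mem : B' ∈ insert B t := Finset.max'_mem _ hne
    have hB'H : B' ∈ H := by
      rcases Finset.mem_insert.1 hB'mem with h | h
      · rwa [h]
      · exact htH h
    obtain ⟨γ, hγH, hγ⟩ := hH B' hB'H
    have hγt : ∀ δ ∈ t, δ < γ := fun δ hδ =>
      lt_of_le_of_lt (Finset.le_max' _ _ (Finset.mem_insert_of_mem hδ)) hγ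
    have hγnot : γ ∉ t := fun h => (hγt γ h).false
    refine ⟨insert γ t, ?_, ?_, ?_⟩
    · intro δ hδ
      rcases Finset.mem_insert.1 hδ with h | h
      · rwa [h]
      · exact htH h
    · rw [Finset.card_insert_of_notMem hγnot, htc]
    · intro δ hδ
      rcases Finset.mem_insert.1 hδ with h | h
      · subst h
        exact lt_of_le_of_lt (Finset.le_max' _ _ (Finset.mem_insert_self _ _)) hγ
      · exact htB δ h

theorem rk_insert_self {g : Finset Ordinal.{u}} {β : Ordinal.{u}} :
    rk (insert β g) β = rk g β := by
  unfold rk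
  rw [Finset.filter_insert]
  simp

theorem rk_le_iff_lt {g : Finset Ordinal.{u}} {β γ : Ordinal.{u}} {k : ℕ}
    (hβ : β ∉ g) (hkβ : rk g β = k) (hγ : γ ∈ g) : β < γ ↔ k ≤ rk g γ := by
  constructor
  · intro h
    rw [← hkβ]
    exact Finset.card_le_card (fun δ hδ => by
      simp only [Finset.mem_filter] at hδ ⊢
      exact ⟨hδ.1, hδ.2.trans h⟩)
  · intro h
    rcases lt_trichotomy β γ with hl | he | hl
    · exact hl
    · exact absurd (he ▸ hγ) hβ
    · exact absurd (hkβ ▸ rk_lt_rk hγ hl) (by omega)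

theorem rk_insert_mem {g : Finset Ordinal.{u}} {β γ : Ordinal.{u}} {k : ℕ}
    (hβ : β ∉ g) (hkβ : rk g β = k) (hγ : γ ∈ g) :
    rk (insert β g) γ = rk g γ + (if k ≤ rk g γ then 1 else 0) := by
  by_cases hc : k ≤ rk g γ
  · rw [if_pos hc]
    have h : β < γ := (rk_le_iff_lt hβ hkβ hγ).2 hc
    unfold rk
    rw [Finset.filter_insert, if_pos h,
      Finset.card_insert_of_notMem (fun hmem => hβ (Finset.mem_filter.1 hmem).1)]
  · rw [if_neg hc]
    have h : ¬ β < γ := fun hl => hc ((rk_le_iff_lt hβ hkβ hγ).1 hl)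
    unfold rk
    rw [Finset.filter_insert, if_neg h]
    simp

theorem ralign_subset {s s' : Set Ordinal.{u}} : ralign s s' ⊆ Set.Iio (otp s) := by
  rintro i ⟨α, h1, _⟩
  rw [← h1.2]
  exact otp_lt s h1.1

theorem ralign_comm {s s' : Set Ordinal.{u}} : ralign s s' = ralign s' s := by
  ext i; exact ⟨fun ⟨α, h1, h2⟩ => ⟨α, h2, h1⟩, fun ⟨α, h1, h2⟩ => ⟨α, h2, h1⟩⟩

theorem img_eq_of_subset_ralign {S S' : Set Ordinal.{u}} {r : Set Ordinal.{u+1}}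
    (h : r ⊆ ralign S S') : img S r = img S' r := by
  ext α
  constructor
  · rintro ⟨i, hir, hi⟩
    obtain ⟨α₀, h1, h2⟩ := h hir
    exact ⟨i, hir, (enumAt_unique hi h1) ▸ h2⟩
  · rintro ⟨i, hir, hi⟩
    obtain ⟨α₀, h1, h2⟩ := h hir
    exact ⟨i, hir, (enumAt_unique hi h2) ▸ h1⟩

theorem claimB (S S' : Set Ordinal.{u}) (hal : Aligned S S') (r : Set Ordinal.{u+1}) :
    img S r ∩ img S' r = img S (r ∩ ralign S S') := by
  ext α
  constructor
  · rintro ⟨⟨i, hir, hi⟩, ⟨i', hi'r, hi'⟩⟩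
    have hmem : α ∈ S ∩ S' := ⟨hi.1, hi'.1⟩
    have hii' : i = i' := by rw [← hi.2, ← hi'.2, hal.2 α hmem]
    subst hii'
    exact ⟨i, ⟨hir, ⟨α, hi, hi'⟩⟩, hi⟩
  · rintro ⟨i, ⟨hir, hiral⟩, hi⟩
    obtain ⟨α₀, h1, h2⟩ := hiral
    have heq := enumAt_unique hi h1
    exact ⟨⟨i, hir, hi⟩, ⟨i, hir, heq ▸ h2⟩⟩

theorem rk_le_card {g : Finset Ordinal.{u}} {β : Ordinal.{u}} : rk g β ≤ g.card :=
  Finset.card_filter_le _ _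

theorem lt_natCast_succ_iff {i : Ordinal.{u+1}} {m : ℕ} :
    i < (m : Ordinal.{u+1}) + 1 ↔ ∃ j : ℕ, j ≤ m ∧ i = (j : Ordinal.{u+1}) := by
  constructor
  · intro h
    have h' : i < ((m + 1 : ℕ) : Ordinal.{u+1}) := by exact_mod_cast h
    have hω : i < Ordinal.omega0 := h'.trans (Ordinal.nat_lt_omega0 (m + 1))
    obtain ⟨j, rfl⟩ := Ordinal.lt_omega0.1 hω
    have : j < m + 1 := by exact_mod_cast h'
    exact ⟨j, by omega, rfl⟩
  · rintro ⟨j, hj, rfl⟩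
    have : ((j : ℕ) : Ordinal.{u+1}) < ((m + 1 : ℕ) : Ordinal.{u+1}) := by
      exact_mod_cast Nat.lt_succ_of_le hj
    simpa using this

theorem enumAt_insert_self {g : Finset Ordinal.{u}} {β : Ordinal.{u}} :
    enumAt ↑(insert β g) ((rk g β : ℕ) : Ordinal.{u+1}) β :=
  enumAt_finset_iff.2 ⟨Finset.mem_insert_self _ _, by rw [rk_insert_self]⟩

theorem insert_align {g : Finset Ordinal.{u}} {β β' : Ordinal.{u}} {k : ℕ}
    (hβ : β ∉ g) (hβ' : β' ∉ g) (hkβ : rk g β = k) (hkβ' : rk g β' = k) :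
    Aligned ↑(insert β g) ↑(insert β' g) ∧
    ∀ j : ℕ, j ≤ g.card → j ≠ k →
      ((j : ℕ) : Ordinal.{u+1}) ∈ ralign ↑(insert β g) ↑(insert β' g) := by
  have hkc : k ≤ g.card := hkβ ▸ rk_le_card
  constructor
  · constructor
    · rw [otp_finset, otp_finset, Finset.card_insert_of_notMem hβ,
        Finset.card_insert_of_notMem hβ']
    · intro γ hγ
      have h1 : γ ∈ insert β g := Finset.mem_coe.1 hγ.1
      have h2 : γ ∈ insert β' g := Finset.mem_coe.1 hγ.2
      have hr : rk (insert β g) γ = rk (insert β' g) γ := by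
        rcases Finset.mem_insert.1 h1 with rfl | hmem
        · rcases Finset.mem_insert.1 h2 with rfl | hmem'
          · rfl
          · exact absurd hmem' hβ
        · rcases Finset.mem_insert.1 h2 with heq | hmem'
          · exact absurd (heq ▸ hmem) hβ'
          · rw [rk_insert_mem hβ hkβ hmem, rk_insert_mem hβ' hkβ' hmem]
      rw [otp_coe_inter_Iio, otp_coe_inter_Iio, hr]
  · intro j hj hjk
    rcases Nat.lt_or_ge j k with hc | hc
    · obtain ⟨α, hαg, hαrk⟩ := rk_surj (lt_of_lt_of_le hc hkc)
      have e1 : rk (insert β g) α = j := by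
        rw [rk_insert_mem hβ hkβ hαg, hαrk, if_neg (by omega)]; omega
      have e2 : rk (insert β' g) α = j := by
        rw [rk_insert_mem hβ' hkβ' hαg, hαrk, if_neg (by omega)]; omega
      exact ⟨α, enumAt_finset_iff.2 ⟨Finset.mem_insert_of_mem hαg, by rw [e1]⟩,
        enumAt_finset_iff.2 ⟨Finset.mem_insert_of_mem hαg, by rw [e2]⟩⟩
    · have hkj : k < j := by omega
      obtain ⟨α, hαg, hαrk⟩ := rk_surj (show j - 1 < g.card by omega)
      have e1 : rk (insert β g) α = j := by
        rw [rk_insert_mem hβ hkβ hαg, hαrk, if_pos (by omega)]; omega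
      have e2 : rk (insert β' g) α = j := by
        rw [rk_insert_mem hβ' hkβ' hαg, hαrk, if_pos (by omega)]; omega
      exact ⟨α, enumAt_finset_iff.2 ⟨Finset.mem_insert_of_mem hαg, by rw [e1]⟩,
        enumAt_finset_iff.2 ⟨Finset.mem_insert_of_mem hαg, by rw [e2]⟩⟩

theorem mem_fimg_Iio {f : Finset Ordinal.{u}} {m : ℕ} {γ : Ordinal.{u}} :
    γ ∈ fimg f (Set.Iio ((m : Ordinal.{u+1}) + 1)) ↔ γ ∈ f ∧ rk f γ ≤ m := by
  unfold fimg
  simp only [Set.mem_setOf_eq, Set.mem_Iio]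
  constructor
  · rintro ⟨h1, h2⟩
    obtain ⟨j, hj, hcast⟩ := lt_natCast_succ_iff.1 h2
    have : rk f γ = j := by exact_mod_cast hcast
    exact ⟨h1, by omega⟩
  · rintro ⟨h1, h2⟩
    exact ⟨h1, lt_natCast_succ_iff.2 ⟨rk f γ, h2, rfl⟩⟩

theorem pair_align {n m : ℕ} (hmn : m < n) {x d t : Finset Ordinal.{u}}
    (hx : x.card = n) (hd : d.card = m + 1) (htc : t.card = n - (m + 1))
    (hfx : fimg x (Set.Iio ((m : Ordinal.{u+1}) + 1)) = ↑d)
    (htx : ∀ γ ∈ t, ∀ δ ∈ x, δ < γ) :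
    (d ∪ t).card = n ∧ Aligned ↑x ↑(d ∪ t) ∧
      Set.Iio ((m : Ordinal.{u+1}) + 1) ⊆ ralign ↑x ↑(d ∪ t) := by
  have hmem : ∀ γ : Ordinal.{u}, γ ∈ d ↔ γ ∈ x ∧ rk x γ ≤ m := by
    intro γ
    rw [← Finset.mem_coe, ← hfx, mem_fimg_Iio]
  have hdx : d ⊆ x := fun γ hγ => ((hmem γ).1 hγ).1
  have hdt : ∀ γ ∈ d, ∀ τ ∈ t, γ < τ := fun γ hγ τ hτ => htx τ hτ γ (hdx hγ)
  have hdisj : Disjoint d t :=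
    Finset.disjoint_left.2 (fun {γ} hγd hγt => (hdt γ hγd γ hγt).false)
  have hcard : (d ∪ t).card = n := by
    rw [Finset.card_union_of_disjoint hdisj, hd, htc]; omega
  have hrkx : ∀ γ ∈ d, rk x γ = rk d γ := by
    intro γ hγ
    have hfil : x.filter (· < γ) = d.filter (· < γ) := by
      apply Finset.Subset.antisymm
      · intro δ hδ
        rw [Finset.mem_filter] at hδ ⊢
        refine ⟨?_, hδ.2⟩
        have h1 : rk x δ < rk x γ := rk_lt_rk hδ.1 hδ.2
        have h2 : rk x γ ≤ m := ((hmem γ).1 hγ).2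
        exact (hmem δ).2 ⟨hδ.1, by omega⟩
      · exact Finset.filter_subset_filter _ hdx
    unfold rk; rw [hfil]
  have hrky : ∀ γ ∈ d, rk (d ∪ t) γ = rk d γ := by
    intro γ hγ
    unfold rk
    rw [Finset.filter_union]
    have hte : t.filter (· < γ) = ∅ :=
      Finset.filter_eq_empty_iff.2 (fun {τ} hτ => not_lt.2 (hdt γ hγ τ hτ).le)
    rw [hte, Finset.union_empty]
  have hxy : (↑x ∩ ↑(d ∪ t) : Set Ordinal.{u}) = ↑d := by
    ext γ
    constructor
    · rintro ⟨h1, h2⟩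
      rcases Finset.mem_union.1 (Finset.mem_coe.1 h2) with h | h
      · exact h
      · exact absurd (htx γ h γ (Finset.mem_coe.1 h1)) (lt_irrefl γ)
    · intro hγ
      exact ⟨Finset.mem_coe.2 (hdx hγ), Finset.mem_coe.2 (Finset.mem_union_left _ hγ)⟩
  refine ⟨hcard, ⟨?_, ?_⟩, ?_⟩
  · rw [otp_finset, otp_finset, hx, hcard]
  · intro γ hγ
    have hγd : γ ∈ d := by rw [hxy] at hγ; exact hγ
    rw [otp_coe_inter_Iio, otp_coe_inter_Iio, hrkx γ hγd, ← hrky γ hγd]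
  · intro i hi
    obtain ⟨j, hj, rfl⟩ := lt_natCast_succ_iff.1 hi
    obtain ⟨α, hαd, hαrk⟩ := rk_surj (show j < d.card by omega)
    exact ⟨α, enumAt_finset_iff.2 ⟨hdx hαd, by rw [hrkx α hαd, hαrk]⟩,
      enumAt_finset_iff.2 ⟨Finset.mem_union_left _ hαd, by rw [hrky α hαd, hαrk]⟩⟩

theorem claimA {H : Set Ordinal.{u}} {n : ℕ} {u : Finset Ordinal.{u} → Set Ordinal.{u}}
    {ρ : Ordinal.{u+1}} {rr : Set Ordinal.{u+1} → Set Ordinal.{u+1}}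
    (hu : IsUniformDeltaSystem H n u ρ rr)
    {x y : Finset Ordinal.{u}} (hxH : ↑x ⊆ H) (hyH : ↑y ⊆ H)
    (hxc : x.card = n) (hyc : y.card = n)
    (hal : Aligned ↑x ↑y) {s : Set Ordinal.{u+1}}
    (hsr : s ⊆ ralign ↑x ↑y) :
    img (u x) (rr s) = img (u y) (rr s) := by
  have hM : ralign (↑x : Set Ordinal.{u}) ↑y ⊆ Set.Iio ((n : ℕ) : Ordinal.{u+1}) := by
    have h := ralign_subset (s := (↑x : Set Ordinal.{u})) (s' := ↑y)
    rwa [otp_finset, hxc] at h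
  have hs : s ⊆ Set.Iio ((n : ℕ) : Ordinal.{u+1}) := hsr.trans hM
  obtain ⟨halu, hralu⟩ := hu.2.1 x y hxH hyH hxc hyc (ralign ↑x ↑y) hal rfl
  have hsM : s ∩ ralign (↑x : Set Ordinal.{u}) ↑y = s := Set.inter_eq_left.2 hsr
  have hrr : rr s ⊆ ralign (u x) (u y) := by
    rw [hralu]
    calc rr s = rr (s ∩ ralign (↑x : Set Ordinal.{u}) ↑y) := by rw [hsM]
    _ = rr s ∩ rr (ralign (↑x : Set Ordinal.{u}) ↑y) := hu.2.2 _ _ hs hM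
    _ ⊆ rr (ralign (↑x : Set Ordinal.{u}) ↑y) := Set.inter_subset_right
  exact img_eq_of_subset_ralign hrr


/-- If `H` has no largest element, `⟨u b | b ∈ [H]^n⟩` is a uniform `n`-dimensional
Δ-system, `a ∈ [H]^m` with `m < n` and `k ≤ m`, then the sets `u_{a∪{β}}` for `β ∈ H`
`k`-addable for `a` form a Δ-system with root `u_{a,k} = u_c[rr((m+1)∖{k})]`:
any two of them (for distinct `β, β'`) intersect exactly in the root.  Here
`u_{a∪{β}} = u_b[rr(m+1)]` for any `b ∈ [H]^n` whose first `m+1` elements are `a ∪ {β}`. -/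
theorem uniformDeltaSystem_delta
    (H : Set Ordinal.{u}) (hH : ∀ β ∈ H, ∃ γ ∈ H, β < γ)
    (n : ℕ) (hn : 1 ≤ n)
    (u : Finset Ordinal.{u} → Set Ordinal.{u}) (ρ : Ordinal.{u+1})
    (rr : Set Ordinal.{u+1} → Set Ordinal.{u+1})
    (hu : IsUniformDeltaSystem H n u ρ rr)
    (m k : ℕ) (hmn : m < n) (hkm : k ≤ m)
    (a : Finset Ordinal.{u}) (haH : ↑a ⊆ H) (hac : a.card = m)
    (β β' : Ordinal.{u}) (hβ : β ∈ H) (hβ' : β' ∈ H) (hββ' : β ≠ β')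
    (hβadd : KAddable β a k) (hβ'add : KAddable β' a k)
    (b b' c : Finset Ordinal.{u}) (hbH : ↑b ⊆ H) (hb'H : ↑b' ⊆ H) (hcH : ↑c ⊆ H)
    (hbc : b.card = n) (hb'c : b'.card = n) (hcc : c.card = n)
    (hbext : fimg b (Set.Iio ((m : Ordinal.{u+1}) + 1)) = ↑(insert β a))
    (hb'ext : fimg b' (Set.Iio ((m : Ordinal.{u+1}) + 1)) = ↑(insert β' a))
    (hcext : fimg c (Set.Iio ((m : Ordinal.{u+1}) + 1) \ {(k : Ordinal.{u+1})}) = ↑a) :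
    img (u b) (rr (Set.Iio ((m : Ordinal.{u+1}) + 1))) ∩
        img (u b') (rr (Set.Iio ((m : Ordinal.{u+1}) + 1))) =
      img (u c) (rr (Set.Iio ((m : Ordinal.{u+1}) + 1) \ {(k : Ordinal.{u+1})})) := by
  classical
  obtain ⟨hβa, hβk⟩ := hβadd
  obtain ⟨hβ'a, hβ'k⟩ := hβ'add
  have hβk' : rk a β = k := hβk
  have hβ'k' : rk a β' = k := hβ'k
  set I : Set Ordinal.{u+1} := Set.Iio ((m : Ordinal.{u+1}) + 1) with hI
  -- the bound and the tail
  set F : Finset Ordinal.{u} := ((b ∪ b') ∪ c) ∪ insert β (insert β' a) with hF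
  have hFH : ∀ δ ∈ F, δ ∈ H := by
    intro δ hδ
    simp only [hF, Finset.mem_union, Finset.mem_insert] at hδ
    rcases hδ with (((h | h) | h) | (h | h | h))
    exacts [hbH h, hb'H h, hcH h, h ▸ hβ, h ▸ hβ', haH h]
  have hFne : F.Nonempty := ⟨β, by simp [hF]⟩
  have hBH : F.max' hFne ∈ H := hFH _ (F.max'_mem hFne)
  obtain ⟨t, htH, htc, htB⟩ := exists_tail H hH hBH (n - (m + 1))
  have htF : ∀ γ ∈ t, ∀ δ ∈ F, δ < γ := fun γ hγ δ hδ =>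
    lt_of_le_of_lt (Finset.le_max' F δ hδ) (htB γ hγ)
  have hbF : ∀ δ ∈ b, δ ∈ F := fun δ h => by simp [hF, h]
  have hb'F : ∀ δ ∈ b', δ ∈ F := fun δ h => by simp [hF, h]
  have hcF : ∀ δ ∈ c, δ ∈ F := fun δ h => by simp [hF, h]
  have haF : ∀ δ ∈ a, δ ∈ F := fun δ h => by simp [hF, h]
  have hβF : β ∈ F := by simp [hF]
  have hβ'F : β' ∈ F := by simp [hF]
  -- pair_align for b and b'
  have hdcard : (insert β a).card = m + 1 := by rw [Finset.card_insert_of_notMem hβa, hac]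
  have hd'card : (insert β' a).card = m + 1 := by rw [Finset.card_insert_of_notMem hβ'a, hac]
  obtain ⟨hycard, hyal, hyral⟩ :=
    pair_align hmn hbc hdcard htc hbext (fun γ hγ δ hδ => htF γ hγ δ (hbF δ hδ))
  obtain ⟨hy'card, hy'al, hy'ral⟩ :=
    pair_align hmn hb'c hd'card htc hb'ext (fun γ hγ δ hδ => htF γ hγ δ (hb'F δ hδ))
  -- the element ε of c at position k
  obtain ⟨ε, hεc, hεrk⟩ := rk_surj (f := c) (j := k) (by rw [hcc]; omega)
  have hamem : ∀ γ : Ordinal.{u}, γ ∈ a ↔ γ ∈ c ∧ rk c γ ≤ m ∧ rk c γ ≠ k := by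
    intro γ
    rw [← Finset.mem_coe, ← hcext]
    unfold fimg
    simp only [Set.mem_setOf_eq, Set.mem_diff, Set.mem_Iio, Set.mem_singleton_iff]
    constructor
    · rintro ⟨h1, h2, h3⟩
      obtain ⟨j, hj, hcast⟩ := lt_natCast_succ_iff.1 h2
      have hrkj : rk c γ = j := by exact_mod_cast hcast
      refine ⟨h1, by omega, fun hk => h3 ?_⟩
      exact_mod_cast congrArg (Nat.cast : ℕ → Ordinal.{u+1}) hk
    · rintro ⟨h1, h2, h3⟩
      refine ⟨h1, lt_natCast_succ_iff.2 ⟨rk c γ, h2, rfl⟩, fun hcast => h3 ?_⟩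
      exact_mod_cast hcast
  have hεa : ε ∉ a := fun h => (((hamem ε).1 h).2.2) hεrk
  have hεH : ε ∈ H := hcH hεc
  have haC : a ⊆ c := fun γ h => ((hamem γ).1 h).1
  have hεF : ε ∈ F := hcF ε hεc
  have hecard : (insert ε a).card = m + 1 := by rw [Finset.card_insert_of_notMem hεa, hac]
  have hcfimg : fimg c I = ↑(insert ε a) := by
    ext γ
    rw [hI, mem_fimg_Iio]
    simp only [Finset.coe_insert, Set.mem_insert_iff, Finset.mem_coe]
    constructor
    · rintro ⟨h1, h2⟩
      by_cases hk : rk c γ = k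
      · exact Or.inl (rk_inj h1 hεc (by rw [hk, hεrk]))
      · exact Or.inr ((hamem γ).2 ⟨h1, h2, hk⟩)
    · rintro (rfl | h)
      · exact ⟨hεc, by omega⟩
      · exact ⟨((hamem γ).1 h).1, ((hamem γ).1 h).2.1⟩
  obtain ⟨hy''card, hy''al, hy''ral⟩ :=
    pair_align hmn hcc hecard htc hcfimg (fun γ hγ δ hδ => htF γ hγ δ (hcF δ hδ))
  -- H-subsets of the new finsets
  have hinsH : ∀ (δ : Ordinal.{u}), δ ∈ H → ↑(insert δ a ∪ t) ⊆ H := by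
    intro δ hδ γ hγ
    rcases Finset.mem_union.1 (Finset.mem_coe.1 hγ) with h | h
    · rcases Finset.mem_insert.1 h with rfl | h
      · exact hδ
      · exact haH h
    · exact htH h
  -- claimA reductions
  have eq1 : img (u b) (rr I) = img (u (insert β a ∪ t)) (rr I) :=
    claimA hu hbH (hinsH β hβ) hbc hycard hyal hyral
  have eq2 : img (u b') (rr I) = img (u (insert β' a ∪ t)) (rr I) :=
    claimA hu hb'H (hinsH β' hβ') hb'c hy'card hy'al hy'ral
  have eq3 : img (u c) (rr (I \ {(k : Ordinal.{u+1})})) =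
      img (u (insert ε a ∪ t)) (rr (I \ {(k : Ordinal.{u+1})})) :=
    claimA hu hcH (hinsH ε hεH) hcc hy''card hy''al (Set.diff_subset.trans hy''ral)
  -- the common part g = a ∪ t
  have hta : ∀ τ ∈ t, ∀ δ ∈ a, δ < τ := fun τ hτ δ hδ => htF τ hτ δ (haF δ hδ)
  set g : Finset Ordinal.{u} := a ∪ t with hg
  have hnotg : ∀ (δ : Ordinal.{u}), δ ∈ F → δ ∉ a → δ ∉ g := by
    intro δ hδF hδa hδg
    rcases Finset.mem_union.1 hδg with h | h
    · exact hδa h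
    · exact (htF δ h δ hδF).false
  have hβg : β ∉ g := hnotg β hβF hβa
  have hβ'g : β' ∉ g := hnotg β' hβ'F hβ'a
  have hεg : ε ∉ g := hnotg ε hεF hεa
  have hrkg : ∀ (δ : Ordinal.{u}), δ ∈ F → rk g δ = rk a δ := by
    intro δ hδF
    unfold rk
    rw [hg, Finset.filter_union,
      Finset.filter_eq_empty_iff.2 (fun {τ} hτ => not_lt.2 (htF τ hτ δ hδF).le),
      Finset.union_empty]
  have hrkgβ : rk g β = k := by rw [hrkg β hβF, hβk']
  have hrkgβ' : rk g β' = k := by rw [hrkg β' hβ'F, hβ'k']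
  have hrkaε : rk a ε = k := by
    have hfil : a.filter (· < ε) = c.filter (· < ε) := by
      apply Finset.Subset.antisymm
      · exact Finset.filter_subset_filter _ haC
      · intro δ hδ
        rw [Finset.mem_filter] at hδ ⊢
        have h1 : rk c δ < rk c ε := rk_lt_rk hδ.1 hδ.2
        rw [hεrk] at h1
        exact ⟨(hamem δ).2 ⟨hδ.1, by omega, by omega⟩, hδ.2⟩
    unfold rk; rw [hfil]; exact hεrk
  have hrkgε : rk g ε = k := by rw [hrkg ε hεF, hrkaε]
  have hgdisj : Disjoint a t :=
    Finset.disjoint_left.2 (fun {γ} hγa hγt => (hta γ hγt γ hγa).false)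
  have hgcard : g.card = m + (n - (m + 1)) := by
    rw [hg, Finset.card_union_of_disjoint hgdisj, hac, htc]
  -- insert_align pairs
  obtain ⟨halyy', hralyy'⟩ := insert_align hβg hβ'g hrkgβ hrkgβ'
  obtain ⟨halyy'', hralyy''⟩ := insert_align hβg hεg hrkgβ hrkgε
  have hyg : insert β a ∪ t = insert β g := Finset.insert_union β a t
  have hy'g : insert β' a ∪ t = insert β' g := Finset.insert_union β' a t
  have hy''g : insert ε a ∪ t = insert ε g := Finset.insert_union ε a t
  -- I \ {k} ⊆ ralign (insert β g) (insert ε g)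
  have hdiffsub : (I \ {(k : Ordinal.{u+1})}) ⊆ ralign ↑(insert β g) ↑(insert ε g) := by
    rintro i ⟨hiI, hik⟩
    obtain ⟨j, hj, rfl⟩ := lt_natCast_succ_iff.1 hiI
    refine hralyy'' j (by omega) (fun h => hik ?_)
    exact Set.mem_singleton_iff.2 (by exact_mod_cast h)
  have eq4 : img (u (insert β g)) (rr (I \ {(k : Ordinal.{u+1})})) =
      img (u (insert ε g)) (rr (I \ {(k : Ordinal.{u+1})})) := by
    refine claimA hu ?_ ?_ ?_ ?_ halyy'' hdiffsub
    · rw [← hyg]; exact hinsH β hβ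
    · rw [← hy''g]; exact hinsH ε hεH
    · rw [← hyg]; exact hycard
    · rw [← hy''g]; exact hy''card
  -- uniformity for the pair (insert β g, insert β' g)
  obtain ⟨halu, hralu⟩ := hu.2.1 (insert β g) (insert β' g)
    (by rw [← hyg]; exact hinsH β hβ) (by rw [← hy'g]; exact hinsH β' hβ')
    (by rw [← hyg]; exact hycard) (by rw [← hy'g]; exact hy'card)
    (ralign ↑(insert β g) ↑(insert β' g)) halyy' rfl
  have hIn : I ⊆ Set.Iio ((n : ℕ) : Ordinal.{u+1}) := by
    intro i hi
    obtain ⟨j, hj, rfl⟩ := lt_natCast_succ_iff.1 hi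
    exact Set.mem_Iio.2 (by exact_mod_cast show j < n by omega)
  have hMn : ralign ↑(insert β g) ↑(insert β' g) ⊆ Set.Iio ((n : ℕ) : Ordinal.{u+1}) := by
    have h := ralign_subset (s := (↑(insert β g) : Set Ordinal.{u})) (s' := ↑(insert β' g))
    rwa [otp_finset, show (insert β g).card = n by rw [← hyg]; exact hycard] at h
  have hIM : I ∩ ralign ↑(insert β g) ↑(insert β' g) = I \ {(k : Ordinal.{u+1})} := by
    ext i
    constructor
    · rintro ⟨hiI, hiM⟩
      refine ⟨hiI, fun hik => ?_⟩
      rw [Set.mem_singleton_iff] at hik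
      subst hik
      obtain ⟨α, h1, h2⟩ := hiM
      have e1 : α = β := enumAt_unique h1
        (by have h := enumAt_insert_self (g := g) (β := β); rwa [hrkgβ] at h)
      have e2 : α = β' := enumAt_unique h2
        (by have h := enumAt_insert_self (g := g) (β := β'); rwa [hrkgβ'] at h)
      exact hββ' (e1 ▸ e2)
    · rintro ⟨hiI, hik⟩
      refine ⟨hiI, ?_⟩
      obtain ⟨j, hj, rfl⟩ := lt_natCast_succ_iff.1 hiI
      refine hralyy' j (by omega) (fun h => hik ?_)
      exact Set.mem_singleton_iff.2 (by exact_mod_cast h)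
  have key : img (u (insert β g)) (rr I) ∩ img (u (insert β' g)) (rr I) =
      img (u (insert β g)) (rr (I \ {(k : Ordinal.{u+1})})) := by
    rw [claimB _ _ halu (rr I), hralu, ← hu.2.2 I _ hIn hMn, hIM]
  rw [eq1, eq2, eq3, hyg, hy'g, hy''g, key, eq4]
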